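/- For the quartic gBBM phase, the points (η₁,η₂,η₃;ξ) = (ξ/4, ξ/4, ξ/4; ξ) and (ξ/2, ξ/2, ξ/2; ξ) are space resonances for every ξ ∈ ℝ (i.e., ∇_{η₁,η₂,η₃}φ = 0 there), and the phase φ vanishes at these points if and only if ξ = 0. -/

import Mathlib

noncomputable def ω : ℝ → ℝ := fun ξ => ξ / (1 + ξ^2)

noncomputable def φ (η₁ η₂ η₃ ξ : ℝ) : ℝ :=
  -ω ξ + ω η₁ + ω η₂ + ω η₃ + ω (ξ - η₁ - η₂ - η₃)

/-!
Since `∂φ/∂η₁ = ω'(η₁) - ω'(ξ - η₁ - η₂ - η₃)` and `ω'(x) = (1 - x²)/(1 + x²)²` is even, the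
gradient vanishes at `(a, a, a; ξ)` as soon as `(ξ - 3a)² = a²`, i.e. for `a = ξ/4` and `a = ξ/2`;
the other two partials follow from the symmetry of `φ` in `η₁, η₂, η₃`. On these two diagonals the
phase reduces to `k ω(ξ/k) - ω(ξ) = (k² - 1) ξ³ / ((k² + ξ²)(1 + ξ²))` with `k = 4, 2`.
-/

lemma ω_neg (x : ℝ) : ω (-x) = -ω x := by
  simp only [ω, neg_sq, neg_div]

lemma hasDerivAt_ω (x : ℝ) : HasDerivAt ω ((1 - x^2) / (1 + x^2)^2) x := by
  have hden : HasDerivAt (fun t : ℝ => 1 + t^2) (2 * x) x := by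
    simpa using (hasDerivAt_pow 2 x).const_add 1
  exact ((hasDerivAt_id' x).div hden (by positivity)).congr_deriv (by ring)

lemma deriv_ω_eq_of_sq_eq {x y : ℝ} (h : x^2 = y^2) : deriv ω x = deriv ω y := by
  rw [(hasDerivAt_ω x).deriv, (hasDerivAt_ω y).deriv, h]

lemma deriv_φ_fst (η₂ η₃ ξ x : ℝ) :
    deriv (fun t => φ t η₂ η₃ ξ) x = deriv ω x - deriv ω (ξ - x - η₂ - η₃) := by
  have hη₄ : HasDerivAt (fun t : ℝ => ξ - t - η₂ - η₃) (-1) x := by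
    simpa using (((hasDerivAt_id x).const_sub ξ).sub_const η₂).sub_const η₃
  have hφ := ((((hasDerivAt_ω x).const_add (-ω ξ)).add_const (ω η₂)).add_const (ω η₃)).add
    ((hasDerivAt_ω (ξ - x - η₂ - η₃)).comp x hη₄)
  rw [(hasDerivAt_ω x).deriv, (hasDerivAt_ω _).deriv]
  exact hφ.deriv.trans (by ring)

lemma φ_swap₁₂ (η₁ η₂ η₃ ξ : ℝ) : φ η₁ η₂ η₃ ξ = φ η₂ η₁ η₃ ξ := by
  simp only [φ]
  ring_nf

lemma φ_swap₁₃ (η₁ η₂ η₃ ξ : ℝ) : φ η₁ η₂ η₃ ξ = φ η₃ η₂ η₁ ξ := by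
  simp only [φ]
  ring_nf

lemma diag_space_resonance {a ξ : ℝ} (h : (ξ - 3 * a)^2 = a^2) :
    deriv (fun t => φ t a a ξ) a = 0 ∧
    deriv (fun t => φ a t a ξ) a = 0 ∧
    deriv (fun t => φ a a t ξ) a = 0 := by
  have hfst : deriv (fun t => φ t a a ξ) a = 0 := by
    rw [deriv_φ_fst, sub_eq_zero]
    exact deriv_ω_eq_of_sq_eq (by rw [← h]; ring)
  refine ⟨hfst, ?_, ?_⟩
  · simpa only [φ_swap₁₂ a] using hfst
  · simpa only [φ_swap₁₃ a] using hfst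

lemma mul_ω_div_sub_ω_eq_zero_iff {k : ℝ} (hk : k^2 ≠ 1) (ξ : ℝ) :
    k * ω (ξ / k) - ω ξ = 0 ↔ ξ = 0 := by
  rcases eq_or_ne k 0 with rfl | hk₀
  · simp only [ω, zero_mul, zero_sub, neg_eq_zero, div_eq_zero_iff]
    exact or_iff_left (by positivity)
  have hform : k * ω (ξ / k) - ω ξ = (k^2 - 1) * ξ^3 / ((k^2 + ξ^2) * (1 + ξ^2)) := by
    simp only [ω]
    field_simp
    ring
  have hden : (k^2 + ξ^2) * (1 + ξ^2) ≠ 0 := by positivity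
  rw [hform, div_eq_zero_iff, or_iff_left hden, mul_eq_zero, or_iff_right (sub_ne_zero.mpr hk),
    pow_eq_zero_iff three_ne_zero]

theorem bbm_diagonal_space_resonances :
    ∀ ξ : ℝ,
      (deriv (fun t => φ t (ξ/4) (ξ/4) ξ) (ξ/4) = 0 ∧
       deriv (fun t => φ (ξ/4) t (ξ/4) ξ) (ξ/4) = 0 ∧
       deriv (fun t => φ (ξ/4) (ξ/4) t ξ) (ξ/4) = 0) ∧
      (deriv (fun t => φ t (ξ/2) (ξ/2) ξ) (ξ/2) = 0 ∧
       deriv (fun t => φ (ξ/2) t (ξ/2) ξ) (ξ/2) = 0 ∧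
       deriv (fun t => φ (ξ/2) (ξ/2) t ξ) (ξ/2) = 0) ∧
      (φ (ξ/4) (ξ/4) (ξ/4) ξ = 0 ↔ ξ = 0) ∧
      (φ (ξ/2) (ξ/2) (ξ/2) ξ = 0 ↔ ξ = 0) := by
  intro ξ
  have hφ₄ : φ (ξ/4) (ξ/4) (ξ/4) ξ = 4 * ω (ξ/4) - ω ξ := by
    simp only [φ]
    rw [show ξ - ξ/4 - ξ/4 - ξ/4 = ξ/4 by ring]
    ring
  have hφ₂ : φ (ξ/2) (ξ/2) (ξ/2) ξ = 2 * ω (ξ/2) - ω ξ := by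
    simp only [φ]
    rw [show ξ - ξ/2 - ξ/2 - ξ/2 = -(ξ/2) by ring, ω_neg]
    ring
  refine ⟨diag_space_resonance (by ring), diag_space_resonance (by ring), ?_, ?_⟩
  · rw [hφ₄]
    exact mul_ω_div_sub_ω_eq_zero_iff (by norm_num) ξ
  · rw [hφ₂]
    exact mul_ω_div_sub_ω_eq_zero_iff (by norm_num) ξ
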